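/- Let h ∈ ℝ^n, let k be a positive integer, and let T, T' ⊆ {1,…,n} be disjoint sets with |T'| = k, |T| ≤ k, and |h_u| ≤ |h_v| for every u ∈ T and v ∈ T'. Then ‖h_T‖₂ ≤ k^{−1/2}‖h_{T'}‖₁. -/

import Mathlib

open Finset

/-- The restriction of a vector to a set of indices: agrees with `x` on `S`, zero elsewhere. -/
noncomputable def restr {n : ℕ} (x : Fin n → ℝ) (S : Finset (Fin n)) : Fin n → ℝ :=
  fun i => if i ∈ S then x i else 0

/-- The ℓ1 norm of a vector in ℝ^n. -/
noncomputable def nrm1 {n : ℕ} (x : Fin n → ℝ) : ℝ := ∑ i, |x i|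

/-- The ℓ2 (Euclidean) norm of a vector in ℝ^n. -/
noncomputable def nrm2 {n : ℕ} (x : Fin n → ℝ) : ℝ := Real.sqrt (∑ i, (x i) ^ 2)

/-- The weighted ℓ1 norm associated with support-estimate sets `T 1, …, T N`
(with weights `w 1, …, w N`), where weight `1` is used off `⋃ i, T i`. -/
noncomputable def wl1 {n : ℕ} (N : ℕ) (T : ℕ → Finset (Fin n)) (w : ℕ → ℝ)
    (x : Fin n → ℝ) : ℝ :=
  ∑ i ∈ Finset.Icc 1 N, w i * nrm1 (restr x (T i)) +
    nrm1 (restr x ((Finset.Icc 1 N).biUnion T)ᶜ)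

/-- `A` satisfies the restricted isometry bound with constant `δ` at sparsity level `k`. -/
def RIPBound {m n : ℕ} (A : Matrix (Fin m) (Fin n) ℝ) (δ : ℝ) (k : ℕ) : Prop :=
  ∀ v : Fin n → ℝ, (Finset.univ.filter fun i => v i ≠ 0).card ≤ k →
    (1 - δ) * (nrm2 v) ^ 2 ≤ (nrm2 (A.mulVec v)) ^ 2 ∧
      (nrm2 (A.mulVec v)) ^ 2 ≤ (1 + δ) * (nrm2 v) ^ 2

/-- The constant `K_N` appearing in the multi-weight recovery guarantee. -/
noncomputable def KN (N : ℕ) (w ρ α : ℕ → ℝ) : ℝ :=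
  w N + (1 - w 1) * Real.sqrt (1 + ∑ i ∈ Finset.Icc 1 N, (ρ i - 2 * α i * ρ i)) +
    ∑ j ∈ Finset.Icc 2 N, (w (j - 1) - w j) *
      Real.sqrt (1 + ∑ i ∈ Finset.Icc j N, (ρ i - 2 * α i * ρ i))

/-- The quantity `D` appearing in the multi-weight error bounds. -/
noncomputable def DD {n : ℕ} (N : ℕ) (T : ℕ → Finset (Fin n)) (T₀ : Finset (Fin n))
    (w : ℕ → ℝ) (x : Fin n → ℝ) : ℝ :=
  (∑ i ∈ Finset.Icc 1 N, w i) * nrm1 (restr x T₀ᶜ) +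
    (1 - ∑ i ∈ Finset.Icc 1 N, w i) *
      nrm1 (restr x (((Finset.Icc 1 N).biUnion T)ᶜ ∩ T₀ᶜ)) -
    ∑ i ∈ Finset.Icc 1 N, (∑ j ∈ (Finset.Icc 1 N).erase i, w j) *
      nrm1 (restr x (T i ∩ T₀ᶜ))

/-- The set `S_j = (T₀ ∪ ⋃_{i=j}^N T̃ᵢ) \ ⋃_{i=j}^N (T̃ᵢ ∩ T₀)`. -/
def SS {n : ℕ} (N : ℕ) (T : ℕ → Finset (Fin n)) (T₀ : Finset (Fin n)) (j : ℕ) :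
    Finset (Fin n) :=
  (T₀ ∪ (Finset.Icc j N).biUnion T) \ (Finset.Icc j N).biUnion (fun i => T i ∩ T₀)

lemma nrm1_restr {n : ℕ} (x : Fin n → ℝ) (S : Finset (Fin n)) :
    nrm1 (restr x S) = ∑ i ∈ S, |x i| := by
  simp only [nrm1, restr, apply_ite abs, abs_zero, Finset.sum_ite_mem, Finset.univ_inter]

lemma nrm2_restr {n : ℕ} (x : Fin n → ℝ) (S : Finset (Fin n)) :
    nrm2 (restr x S) = √(∑ i ∈ S, x i ^ 2) := by
  simp only [nrm2, restr, apply_ite (· ^ 2), ne_eq, OfNat.ofNat_ne_zero, not_false_eq_true,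
    zero_pow, Finset.sum_ite_mem, Finset.univ_inter]

section BlockSorting

variable {ι : Type*} {s t : Finset ι} {f : ι → ℝ}

lemma abs_le_sum_abs_div_card (ht : t.Nonempty) (hle : ∀ u ∈ s, ∀ v ∈ t, |f u| ≤ |f v|) :
    ∀ u ∈ s, |f u| ≤ (∑ v ∈ t, |f v|) / #t := fun u hu => by
  rw [le_div_iff₀ (by exact_mod_cast ht.card_pos), mul_comm, ← nsmul_eq_mul]
  exact Finset.card_nsmul_le_sum t _ _ (hle u hu)

lemma sqrt_sum_sq_le_inv_sqrt_card_mul_sum_abs (hcard : #s ≤ #t)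
    (hle : ∀ u ∈ s, ∀ v ∈ t, |f u| ≤ |f v|) :
    √(∑ u ∈ s, f u ^ 2) ≤ (√(#t : ℝ))⁻¹ * ∑ v ∈ t, |f v| := by
  rcases t.eq_empty_or_nonempty with rfl | ht
  · -- then `s = ∅` too, and the right side is `(√0)⁻¹ * 0 = 0`
    simp [Finset.card_eq_zero.mp (Nat.le_zero.mp hcard)]
  set M := ∑ v ∈ t, |f v|
  have hk : (0 : ℝ) < #t := by exact_mod_cast ht.card_pos
  have hM : 0 ≤ M / #t := div_nonneg (Finset.sum_nonneg fun _ _ => abs_nonneg _) hk.le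
  have hsq : ∑ u ∈ s, f u ^ 2 ≤ #s * (M / #t) ^ 2 := by
    rw [← nsmul_eq_mul]
    refine Finset.sum_le_card_nsmul s _ _ fun u hu => ?_
    rw [← sq_abs]
    exact pow_le_pow_left₀ (abs_nonneg _) (abs_le_sum_abs_div_card ht hle u hu) 2
  calc √(∑ u ∈ s, f u ^ 2) ≤ √(#s * (M / #t) ^ 2) := Real.sqrt_le_sqrt hsq
    _ ≤ √(#t * (M / #t) ^ 2) := by gcongr
    _ = √(#t : ℝ) * (M / #t) := by rw [Real.sqrt_mul hk.le, Real.sqrt_sq hM]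
    _ = (√(#t : ℝ))⁻¹ * M := by
      rw [mul_div_assoc', mul_div_right_comm, Real.sqrt_div_self', one_div, mul_comm]

end BlockSorting

theorem block_sorting_bound_general
    {n : ℕ} (h : Fin n → ℝ) (k : ℕ) (T T' : Finset (Fin n))
    (hT'card : T'.card = k) (hTcard : T.card ≤ k)
    (hsorted : ∀ u ∈ T, ∀ v ∈ T', |h u| ≤ |h v|) :
    nrm2 (restr h T) ≤ (Real.sqrt (k : ℝ))⁻¹ * nrm1 (restr h T') := by
  subst hT'card
  rw [nrm2_restr, nrm1_restr]
  exact sqrt_sum_sq_le_inv_sqrt_card_mul_sum_abs hTcard hsorted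

/-- the block-sorting bound `‖h_T‖₂ ≤ k^{-1/2} ‖h_{T'}‖₁`. -/
theorem block_sorting_bound
    {n : ℕ} (h : Fin n → ℝ) (k : ℕ) (hk : 0 < k) (T T' : Finset (Fin n))
    (hTT' : Disjoint T T') (hT'card : T'.card = k) (hTcard : T.card ≤ k)
    (hsorted : ∀ u ∈ T, ∀ v ∈ T', |h u| ≤ |h v|) :
    nrm2 (restr h T) ≤ (Real.sqrt (k : ℝ))⁻¹ * nrm1 (restr h T') :=
  block_sorting_bound_general h k T T' hT'card hTcard hsorted
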